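/- For m = 1, the two rate functions agree: for every x ∈ ℝ, Ĩ_T(x) = Î_T(x), where Î_T(x) = inf{ Q̃_T(g) : g ∈ H₀¹, g(T) = x } with Q̃_T(g) = (1/2) inf{ ∫₀ᵀ l̇² + ∫₀ᵀ ḟ² : Φ(l,f)(t) = g(t) for all t ∈ [0,T] } (infimum over l, f ∈ H₀¹, equal to ∞ if no solution exists), and Ĩ_T(x) = (1/2) inf{ y² + ∫₀ᵀ ḟ(t)² dt : y ∈ ℝ, f ∈ H₀¹, Ψ(y,f) = x } (equal to ∞ if the equation is unsolvable). -/

import Mathlib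

open MeasureTheory
open scoped ENNReal

/-- Membership in the Cameron–Martin space `H₀¹[0,T]`: `f(0) = 0`, `f` is the integral
of `f'` on `[0,T]`, and `f'` is square-integrable. -/
def IsCM (T : ℝ) (f f' : ℝ → ℝ) : Prop :=
  f 0 = 0 ∧ (∀ t ∈ Set.Icc (0:ℝ) T, f t = ∫ s in (0:ℝ)..t, f' s) ∧
  IntervalIntegrable f' volume 0 T ∧
  IntervalIntegrable (fun s => (f' s) ^ 2) volume 0 T

/-- The path functional `Φ(l,f)(t)` of the one-dimensional (`m = 1`) model. -/
noncomputable def Phi (d : ℕ) (b σ : ℝ → (Fin d → ℝ) → ℝ) (ρ : ℝ)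
    (hat : (ℝ → ℝ) → ℝ → Fin d → ℝ) (l' f f' : ℝ → ℝ) (t : ℝ) : ℝ :=
  (∫ s in (0:ℝ)..t, b s (hat f s)) +
    Real.sqrt (1 - ρ ^ 2) * (∫ s in (0:ℝ)..t, σ s (hat f s) * l' s) +
    ρ * ∫ s in (0:ℝ)..t, σ s (hat f s) * f' s

/-- The sample-path rate function `Q̃_T(g)`, with value `∞` when `Φ(l,f) = g` has no
solution `l, f ∈ H₀¹`. -/
noncomputable def QT (T : ℝ) (d : ℕ) (b σ : ℝ → (Fin d → ℝ) → ℝ) (ρ : ℝ)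
    (hat : (ℝ → ℝ) → ℝ → Fin d → ℝ) (g : ℝ → ℝ) : ℝ≥0∞ :=
  sInf {v : ℝ≥0∞ | ∃ l l' f f' : ℝ → ℝ, IsCM T l l' ∧ IsCM T f f' ∧
    (∀ t ∈ Set.Icc (0:ℝ) T, Phi d b σ ρ hat l' f f' t = g t) ∧
    v = ENNReal.ofReal ((1 / 2) *
      ((∫ t in (0:ℝ)..T, (l' t) ^ 2) + ∫ t in (0:ℝ)..T, (f' t) ^ 2))}

/-- The functional `Ψ(y,f)` of the one-dimensional model. -/
noncomputable def Psi (T : ℝ) (d : ℕ) (b σ : ℝ → (Fin d → ℝ) → ℝ) (ρ : ℝ)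
    (hat : (ℝ → ℝ) → ℝ → Fin d → ℝ) (y : ℝ) (f f' : ℝ → ℝ) : ℝ :=
  (∫ s in (0:ℝ)..T, b s (hat f s)) +
    ρ * (∫ s in (0:ℝ)..T, σ s (hat f s) * f' s) +
    Real.sqrt (1 - ρ ^ 2) * Real.sqrt (∫ s in (0:ℝ)..T, (σ s (hat f s)) ^ 2) * y

/-! For fixed `f`, the endpoint `Φ(l,f)(T)` depends on `l` only through `B = ∫₀ᵀ σ(f̂) l̇`, and
for continuous `l̇` the path `Φ(l,f)` lies in `H₀¹`. With `S = ∫₀ᵀ σ(f̂)²`, Cauchy–Schwarz gives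
`B² ≤ S ∫₀ᵀ l̇²`, so `y = B / √S` solves `Ψ(y,f) = Φ(l,f)(T)` at no greater cost; conversely,
`l̇ = (y / √S) σ(f̂)` turns a solution `(y,f)` of `Ψ(y,f) = x` into a path `g = Φ(l,f)` with
`g(T) = x` and `∫₀ᵀ l̇² ≤ y²`. -/

open Set

theorem sq_integral_mul_le_integral_sq_mul_integral_sq {α : Type*} [MeasurableSpace α]
    {μ : Measure α} {u v : α → ℝ} (hu : Integrable (fun a => u a ^ 2) μ)
    (hv : Integrable (fun a => v a ^ 2) μ) (huv : Integrable (fun a => u a * v a) μ) :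
    (∫ a, u a * v a ∂μ) ^ 2 ≤ (∫ a, u a ^ 2 ∂μ) * ∫ a, v a ^ 2 ∂μ := by
  have hquad : ∀ c : ℝ, 0 ≤ (∫ a, u a ^ 2 ∂μ) * (c * c) + 2 * (∫ a, u a * v a ∂μ) * c +
      ∫ a, v a ^ 2 ∂μ := by
    intro c
    have hexpand : ∫ a, (c * u a + v a) ^ 2 ∂μ = (∫ a, u a ^ 2 ∂μ) * (c * c) +
        2 * (∫ a, u a * v a ∂μ) * c + ∫ a, v a ^ 2 ∂μ := by
      have hpoint : (fun a => (c * u a + v a) ^ 2) =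
          fun a => c ^ 2 * u a ^ 2 + (2 * c * (u a * v a) + v a ^ 2) := by
        funext a; ring
      rw [hpoint, integral_add, integral_add, integral_const_mul, integral_const_mul]
      · ring
      exacts [huv.const_mul _, hv, hu.const_mul _, (huv.const_mul _).add hv]
    exact hexpand ▸ integral_nonneg fun a => sq_nonneg _
  have hdisc := discrim_le_zero hquad
  rw [discrim] at hdisc
  linarith

theorem sq_intervalIntegral_mul_le {a b : ℝ} (hab : a ≤ b) {μ : Measure ℝ} {u v : ℝ → ℝ}
    (hu : IntervalIntegrable (fun s => u s ^ 2) μ a b)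
    (hv : IntervalIntegrable (fun s => v s ^ 2) μ a b)
    (huv : IntervalIntegrable (fun s => u s * v s) μ a b) :
    (∫ s in a..b, u s * v s ∂μ) ^ 2 ≤ (∫ s in a..b, u s ^ 2 ∂μ) * ∫ s in a..b, v s ^ 2 ∂μ := by
  simp only [intervalIntegral.integral_of_le hab]
  exact sq_integral_mul_le_integral_sq_mul_integral_sq hu.1 hv.1 huv.1

-- At `S = 0` the hypothesis forces `B = 0`, which matches the junk value `B / √0 = 0`.
theorem sqrt_mul_div_sqrt_of_sq_le_mul {B S L : ℝ} (hS : 0 ≤ S) (h : B ^ 2 ≤ S * L) :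
    √S * (B / √S) = B := by
  rcases hS.eq_or_lt with rfl | hS
  · have hB : B ^ 2 = 0 := le_antisymm (by simpa using h) (sq_nonneg B)
    simp [pow_eq_zero_iff two_ne_zero |>.mp hB]
  · exact mul_div_cancel₀ B (Real.sqrt_ne_zero'.2 hS)

theorem div_sqrt_sq_le_of_sq_le_mul {B S L : ℝ} (hS : 0 ≤ S) (hL : 0 ≤ L)
    (h : B ^ 2 ≤ S * L) : (B / √S) ^ 2 ≤ L := by
  rw [div_pow, Real.sq_sqrt hS]
  exact div_le_of_le_mul₀ hS hL (by linarith)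

theorem div_sqrt_mul_self (y S : ℝ) : y / √S * S = y * √S := by
  rw [div_mul_eq_mul_div, mul_div_assoc, Real.div_sqrt]

theorem sq_div_sqrt_mul_self_le {S : ℝ} (hS : 0 ≤ S) (y : ℝ) : (y / √S) ^ 2 * S ≤ y ^ 2 := by
  rw [div_pow, Real.sq_sqrt hS]
  rcases hS.eq_or_lt with rfl | hS
  · simp [sq_nonneg]
  · rw [div_mul_cancel₀ _ hS.ne']

theorem IntervalIntegrable.sq_add_mul {a b : ℝ} {A C u : ℝ → ℝ} (hA : ContinuousOn A (uIcc a b))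
    (hC : ContinuousOn C (uIcc a b)) (hu : IntervalIntegrable u volume a b)
    (hu2 : IntervalIntegrable (fun s => u s ^ 2) volume a b) :
    IntervalIntegrable (fun s => (A s + C s * u s) ^ 2) volume a b := by
  have hexpand : (fun s => (A s + C s * u s) ^ 2) =
      fun s => A s ^ 2 + (2 * (A s * C s) * u s + C s ^ 2 * u s ^ 2) := by
    funext s; ring
  rw [hexpand]
  exact (hA.pow 2).intervalIntegrable.add
    ((hu.continuousOn_mul (continuousOn_const.mul (hA.mul hC))).add (hu2.continuousOn_mul (hC.pow 2)))

theorem isCM_intervalIntegral {T : ℝ} {g' : ℝ → ℝ} (hg' : IntervalIntegrable g' volume 0 T)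
    (hg'2 : IntervalIntegrable (fun s => g' s ^ 2) volume 0 T) :
    IsCM T (fun t => ∫ s in (0:ℝ)..t, g' s) g' :=
  ⟨intervalIntegral.integral_same, fun _ _ => rfl, hg', hg'2⟩

section OneDimModel

variable {T : ℝ} {d : ℕ} {b σ : ℝ → (Fin d → ℝ) → ℝ} {ρ : ℝ}
  {hat : (ℝ → ℝ) → ℝ → Fin d → ℝ} {l' f f' : ℝ → ℝ}

theorem Phi_eq_Psi_of_integral_mul_eq {y : ℝ}
    (h : ∫ s in (0:ℝ)..T, σ s (hat f s) * l' s = √(∫ s in (0:ℝ)..T, σ s (hat f s) ^ 2) * y) :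
    Phi d b σ ρ hat l' f f' T = Psi T d b σ ρ hat y f f' := by
  rw [Phi, Psi, h]
  ring

theorem Phi_eq_intervalIntegral {t : ℝ}
    (hb : IntervalIntegrable (fun s => b s (hat f s)) volume 0 t)
    (hl' : IntervalIntegrable (fun s => σ s (hat f s) * l' s) volume 0 t)
    (hf' : IntervalIntegrable (fun s => σ s (hat f s) * f' s) volume 0 t) :
    Phi d b σ ρ hat l' f f' t = ∫ s in (0:ℝ)..t, (b s (hat f s) +
      √(1 - ρ ^ 2) * (σ s (hat f s) * l' s) + ρ * (σ s (hat f s) * f' s)) := by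
  rw [Phi, intervalIntegral.integral_add (hb.add (hl'.const_mul _)) (hf'.const_mul _),
    intervalIntegral.integral_add hb (hl'.const_mul _), intervalIntegral.integral_const_mul,
    intervalIntegral.integral_const_mul]

theorem exists_Psi_eq_Phi (hT : 0 ≤ T) (hσ : ContinuousOn (fun s => σ s (hat f s)) (uIcc 0 T))
    {l : ℝ → ℝ} (hl : IsCM T l l') :
    ∃ y, Psi T d b σ ρ hat y f f' = Phi d b σ ρ hat l' f f' T ∧
      y ^ 2 ≤ ∫ t in (0:ℝ)..T, l' t ^ 2 := by
  set S := ∫ s in (0:ℝ)..T, σ s (hat f s) ^ 2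
  set B := ∫ s in (0:ℝ)..T, σ s (hat f s) * l' s
  have hS : 0 ≤ S := intervalIntegral.integral_nonneg hT fun _ _ => sq_nonneg _
  have hL : 0 ≤ ∫ t in (0:ℝ)..T, l' t ^ 2 :=
    intervalIntegral.integral_nonneg hT fun _ _ => sq_nonneg _
  have hcs : B ^ 2 ≤ S * ∫ t in (0:ℝ)..T, l' t ^ 2 :=
    sq_intervalIntegral_mul_le hT (hσ.pow 2).intervalIntegrable hl.2.2.2
      (hl.2.2.1.continuousOn_mul hσ)
  exact ⟨B / √S, (Phi_eq_Psi_of_integral_mul_eq (sqrt_mul_div_sqrt_of_sq_le_mul hS hcs).symm).symm,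
    div_sqrt_sq_le_of_sq_le_mul hS hL hcs⟩

theorem exists_isCM_eq_Phi (hb : ContinuousOn (fun s => b s (hat f s)) (uIcc 0 T))
    (hσ : ContinuousOn (fun s => σ s (hat f s)) (uIcc 0 T)) (hl' : ContinuousOn l' (uIcc 0 T))
    (hf : IsCM T f f') :
    ∃ g g' : ℝ → ℝ, IsCM T g g' ∧ ∀ t ∈ Icc 0 T, Phi d b σ ρ hat l' f f' t = g t := by
  have hσl' : ContinuousOn (fun s => σ s (hat f s) * l' s) (uIcc 0 T) := hσ.mul hl'
  have hσf' : IntervalIntegrable (fun s => σ s (hat f s) * f' s) volume 0 T :=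
    hf.2.2.1.continuousOn_mul hσ
  set g' : ℝ → ℝ := fun s => b s (hat f s) + √(1 - ρ ^ 2) * (σ s (hat f s) * l' s) +
    ρ * (σ s (hat f s) * f' s)
  have hg' : IntervalIntegrable g' volume 0 T :=
    (hb.intervalIntegrable.add (hσl'.intervalIntegrable.const_mul _)).add (hσf'.const_mul _)
  have hg'2 : IntervalIntegrable (fun s => g' s ^ 2) volume 0 T := by
    convert IntervalIntegrable.sq_add_mul
      (A := fun s => b s (hat f s) + √(1 - ρ ^ 2) * (σ s (hat f s) * l' s))
      (C := fun s => ρ * σ s (hat f s)) (hb.add (continuousOn_const.mul hσl'))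
      (continuousOn_const.mul hσ) hf.2.2.1 hf.2.2.2 using 2 with s
    ring
  refine ⟨fun t => ∫ s in (0:ℝ)..t, g' s, g', isCM_intervalIntegral hg' hg'2, fun t ht => ?_⟩
  have hsub : uIcc 0 t ⊆ uIcc 0 T := uIcc_subset_uIcc left_mem_uIcc (Icc_subset_uIcc ht)
  exact Phi_eq_intervalIntegral (hb.intervalIntegrable.mono_set hsub)
    (hσl'.intervalIntegrable.mono_set hsub) (hσf'.mono_set hsub)

theorem exists_Phi_eq_Psi (hT : 0 ≤ T) (hb : ContinuousOn (fun s => b s (hat f s)) (uIcc 0 T))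
    (hσ : ContinuousOn (fun s => σ s (hat f s)) (uIcc 0 T)) (hf : IsCM T f f') (y : ℝ) :
    ∃ l l' g g' : ℝ → ℝ, IsCM T l l' ∧ IsCM T g g' ∧
      (∀ t ∈ Icc 0 T, Phi d b σ ρ hat l' f f' t = g t) ∧
      g T = Psi T d b σ ρ hat y f f' ∧ ∫ t in (0:ℝ)..T, l' t ^ 2 ≤ y ^ 2 := by
  set S := ∫ s in (0:ℝ)..T, σ s (hat f s) ^ 2
  have hS : 0 ≤ S := intervalIntegral.integral_nonneg hT fun _ _ => sq_nonneg _
  -- the cheapest `l̇` with `∫₀ᵀ σ(f̂) l̇ = √S y` is the multiple of `σ(f̂)` below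
  set l' : ℝ → ℝ := fun s => y / √S * σ s (hat f s)
  have hl' : ContinuousOn l' (uIcc 0 T) := continuousOn_const.mul hσ
  have hσl' : ∫ s in (0:ℝ)..T, σ s (hat f s) * l' s = √S * y := by
    calc _ = ∫ s in (0:ℝ)..T, y / √S * σ s (hat f s) ^ 2 := by congr 1 with s; ring
      _ = √S * y := by rw [intervalIntegral.integral_const_mul, div_sqrt_mul_self, mul_comm]
  have hl'2 : ∫ t in (0:ℝ)..T, l' t ^ 2 = (y / √S) ^ 2 * S := by
    rw [← intervalIntegral.integral_const_mul]
    congr 1 with s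
    ring
  obtain ⟨g, g', hg, hΦ⟩ := exists_isCM_eq_Phi (ρ := ρ) hb hσ hl' hf
  refine ⟨fun t => ∫ s in (0:ℝ)..t, l' s, l', g, g',
    isCM_intervalIntegral hl'.intervalIntegrable (hl'.pow 2).intervalIntegrable, hg, hΦ, ?_, ?_⟩
  · rw [← hΦ T ⟨hT, le_rfl⟩]
    exact Phi_eq_Psi_of_integral_mul_eq hσl'
  · rw [hl'2]
    exact sq_div_sqrt_mul_self_le hS y

end OneDimModel

theorem rate_functions_agree_one_dim (T : ℝ) (hT : 0 < T) (d : ℕ)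
    (b σ : ℝ → (Fin d → ℝ) → ℝ)
    (hb : ContinuousOn (fun p : ℝ × (Fin d → ℝ) => b p.1 p.2)
      (Set.Icc (0:ℝ) T ×ˢ Set.univ))
    (hσ : ContinuousOn (fun p : ℝ × (Fin d → ℝ) => σ p.1 p.2)
      (Set.Icc (0:ℝ) T ×ˢ Set.univ))
    (ρ : ℝ)
    (hat : (ℝ → ℝ) → ℝ → Fin d → ℝ)
    (hhat : ∀ f : ℝ → ℝ, ContinuousOn (hat f) (Set.Icc (0:ℝ) T))
    (x : ℝ) :
    sInf {v : ℝ≥0∞ | ∃ y : ℝ, ∃ f f' : ℝ → ℝ, IsCM T f f' ∧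
        Psi T d b σ ρ hat y f f' = x ∧
        v = ENNReal.ofReal ((1 / 2) * (y ^ 2 + ∫ t in (0:ℝ)..T, (f' t) ^ 2))}
      = sInf {v : ℝ≥0∞ | ∃ g g' : ℝ → ℝ, IsCM T g g' ∧ g T = x ∧
        v = QT T d b σ ρ hat g} := by
  have hcomp : ∀ F : ℝ → (Fin d → ℝ) → ℝ,
      ContinuousOn (fun p : ℝ × (Fin d → ℝ) => F p.1 p.2) (Icc 0 T ×ˢ univ) →
      ∀ f, ContinuousOn (fun s => F s (hat f s)) (uIcc 0 T) := fun F hF f => by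
    rw [uIcc_of_le hT.le]
    exact hF.comp (continuousOn_id.prodMk (hhat f)) fun _ hs => ⟨hs, trivial⟩
  apply le_antisymm
  · refine le_sInf ?_
    rintro _ ⟨g, g', -, hgT, rfl⟩
    refine le_sInf ?_
    rintro _ ⟨l, l', f, f', hl, hf, hΦ, rfl⟩
    obtain ⟨y, hΨ, hy⟩ := exists_Psi_eq_Phi (b := b) (ρ := ρ) (f' := f') hT.le (hcomp σ hσ f) hl
    exact sInf_le_of_le ⟨y, f, f', hf, hΨ.trans ((hΦ T ⟨hT.le, le_rfl⟩).trans hgT), rfl⟩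
      (ENNReal.ofReal_le_ofReal (by linarith))
  · refine le_sInf ?_
    rintro _ ⟨y, f, f', hf, hΨ, rfl⟩
    obtain ⟨l, l', g, g', hl, hg, hΦ, hgT, hly⟩ :=
      exists_Phi_eq_Psi (ρ := ρ) hT.le (hcomp b hb f) (hcomp σ hσ f) hf y
    exact sInf_le_of_le ⟨g, g', hg, hgT.trans hΨ, rfl⟩
      (sInf_le_of_le ⟨l, l', f, f', hl, hf, hΦ, rfl⟩ (ENNReal.ofReal_le_ofReal (by linarith)))
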